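/- arXiv:math/9803057 — 5 statements merged into one kernel-verified Lean document; each statement's English description precedes it below -/
import Mathlib

section
/- Define the partial action of g = [[A,B],[C,D]] ∈ O(n,n|ℝ) on an antisymmetric n×n real matrix θ by g·θ = (Aθ+B)(Cθ+D)⁻¹, whenever Cθ+D is invertible. Then g·θ is again antisymmetric. -/
open Matrix

/-! `g` preserves the split form `⟨(x, y), (x', y')⟩ = xᵀy' + yᵀx'`, so it maps the Lagrangian
graph `{(θv, v)}` of the antisymmetric `θ` to the Lagrangian subspace `{((Aθ + B)v, (Cθ + D)v)}`.
When `Cθ + D` is invertible this is again a graph, namely that of `(Aθ + B)(Cθ + D)⁻¹`, and a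
graph is Lagrangian exactly when the matrix is antisymmetric. -/

variable {m n R : Type*} [Fintype m] [Fintype n] [CommRing R]

theorem transpose_mul_add_transpose_mul_affine_eq_zero [DecidableEq n]
    {A B C D : Matrix m n R} {θ : Matrix n n R}
    (h1 : Aᵀ * C + Cᵀ * A = 0) (h2 : Bᵀ * D + Dᵀ * B = 0) (h3 : Aᵀ * D + Cᵀ * B = 1)
    (hθ : θᵀ = -θ) :
    (A * θ + B)ᵀ * (C * θ + D) + (C * θ + D)ᵀ * (A * θ + B) = 0 := by
  have h3' : Bᵀ * C + Dᵀ * A = 1 := by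
    simpa [transpose_add, transpose_mul, add_comm] using congrArg transpose h3
  calc (A * θ + B)ᵀ * (C * θ + D) + (C * θ + D)ᵀ * (A * θ + B)
      = θᵀ * (Aᵀ * C + Cᵀ * A) * θ + θᵀ * (Aᵀ * D + Cᵀ * B)
          + (Bᵀ * C + Dᵀ * A) * θ + (Bᵀ * D + Dᵀ * B) := by
        simp only [transpose_add, transpose_mul, Matrix.add_mul, Matrix.mul_add, Matrix.mul_assoc]
        abel
    _ = 0 := by
        rw [h1, h2, h3, h3', hθ]
        simp

theorem transpose_mul_inv_eq_neg_of_transpose_mul_add_transpose_mul_eq_zero [DecidableEq n]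
    {X Y : Matrix n n R} (hXY : Xᵀ * Y + Yᵀ * X = 0) (hY : IsUnit Y.det) :
    (X * Y⁻¹)ᵀ = -(X * Y⁻¹) := by
  have hYt : IsUnit Yᵀ.det := by rwa [det_transpose]
  calc (X * Y⁻¹)ᵀ = (Yᵀ)⁻¹ * (Xᵀ * Y) * Y⁻¹ := by
        rw [transpose_mul, transpose_nonsing_inv, Matrix.mul_assoc, Matrix.mul_assoc,
          mul_nonsing_inv _ hY, Matrix.mul_one]
    _ = (Yᵀ)⁻¹ * -(Yᵀ * X) * Y⁻¹ := by rw [eq_neg_of_add_eq_zero_left hXY]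
    _ = -(X * Y⁻¹) := by
        rw [Matrix.mul_neg, Matrix.neg_mul, ← Matrix.mul_assoc, nonsing_inv_mul _ hYt,
          Matrix.one_mul]

/-- If `g = [[A,B],[C,D]] ∈ O(n,n|ℝ)` (i.e. `AᵗC + CᵗA = 0`, `BᵗD + DᵗB = 0`,
`AᵗD + CᵗB = 1`), `θ` is antisymmetric and `Cθ + D` is invertible, then
`g·θ = (Aθ + B)(Cθ + D)⁻¹` is again antisymmetric. -/
theorem stmt8 (n : ℕ) (A B C D θ : Matrix (Fin n) (Fin n) ℝ)
    (h1 : Aᵀ * C + Cᵀ * A = 0) (h2 : Bᵀ * D + Dᵀ * B = 0) (h3 : Aᵀ * D + Cᵀ * B = 1)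
    (hθ : θᵀ = -θ) (hinv : IsUnit (C * θ + D)) :
    ((A * θ + B) * (C * θ + D)⁻¹)ᵀ = -((A * θ + B) * (C * θ + D)⁻¹) :=
  transpose_mul_inv_eq_neg_of_transpose_mul_add_transpose_mul_eq_zero
    (transpose_mul_add_transpose_mul_affine_eq_zero h1 h2 h3 hθ)
    ((isUnit_iff_isUnit_det _).mp hinv)
end

section
/- The partial action of O(n,n|ℝ) on antisymmetric matrices is compatible with the group law: if g₁ = [[A₁,B₁],[C₁,D₁]] and g₂ = [[A₂,B₂],[C₂,D₂]] are in O(n,n|ℝ), θ is antisymmetric, C₂θ+D₂ is invertible, and C₁(g₂·θ)+D₁ is invertible, then writing g₁g₂ = [[A,B],[C,D]], the matrix Cθ+D is invertible and (g₁g₂)·θ = g₁·(g₂·θ). -/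
open Matrix

/-! The linear fractional action satisfies `(X A + Y C) θ + (X B + Y D) = (X (g·θ) + Y)(C θ + D)`,
so numerator and denominator of `(g₁g₂)·θ` are those of `g₁·(g₂·θ)` multiplied on the right by
the same invertible matrix `C₂ θ + D₂`, which cancels in the quotient. -/

namespace Matrix

variable {m α : Type*} [Fintype m] [DecidableEq m] [CommRing α]

noncomputable def linearFractional (A B C D θ : Matrix m m α) : Matrix m m α :=
  (A * θ + B) * (C * θ + D)⁻¹

theorem mul_linearFractional_add_mul {A B C D θ : Matrix m m α} (h : IsUnit (C * θ + D))
    (X Y : Matrix m m α) :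
    (X * linearFractional A B C D θ + Y) * (C * θ + D) = (X * A + Y * C) * θ + (X * B + Y * D) := by
  rw [linearFractional, add_mul, mul_assoc, mul_assoc,
    nonsing_inv_mul _ ((isUnit_iff_isUnit_det _).mp h), mul_one]
  noncomm_ring

theorem mul_mul_inv_mul_cancel {P Q M : Matrix m m α} (hM : IsUnit M) :
    (P * M) * (Q * M)⁻¹ = P * Q⁻¹ := by
  rw [mul_inv_rev, mul_assoc, ← mul_assoc M, mul_nonsing_inv _ ((isUnit_iff_isUnit_det _).mp hM),
    one_mul]

end Matrix

theorem stmt9_general (n : ℕ) (A₁ B₁ C₁ D₁ A₂ B₂ C₂ D₂ θ : Matrix (Fin n) (Fin n) ℝ)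
    (h2 : IsUnit (C₂ * θ + D₂))
    (h1 : IsUnit (C₁ * ((A₂ * θ + B₂) * (C₂ * θ + D₂)⁻¹) + D₁)) :
    IsUnit ((C₁ * A₂ + D₁ * C₂) * θ + (C₁ * B₂ + D₁ * D₂)) ∧
    ((A₁ * A₂ + B₁ * C₂) * θ + (A₁ * B₂ + B₁ * D₂)) *
        ((C₁ * A₂ + D₁ * C₂) * θ + (C₁ * B₂ + D₁ * D₂))⁻¹ =
      (A₁ * ((A₂ * θ + B₂) * (C₂ * θ + D₂)⁻¹) + B₁) *
        (C₁ * ((A₂ * θ + B₂) * (C₂ * θ + D₂)⁻¹) + D₁)⁻¹ := by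
  have hnum := mul_linearFractional_add_mul (A := A₂) (B := B₂) h2 A₁ B₁
  have hden := mul_linearFractional_add_mul (A := A₂) (B := B₂) h2 C₁ D₁
  rw [← hnum, ← hden]
  exact ⟨h1.mul h2, mul_mul_inv_mul_cancel h2⟩

/-- Compatibility of the partial action `g·θ = (Aθ + B)(Cθ + D)⁻¹` of `O(n,n|ℝ)` on
antisymmetric matrices with the group law: if `g₂·θ` is defined and `g₁·(g₂·θ)` is
defined, then `(g₁g₂)·θ` is defined and equals `g₁·(g₂·θ)`. -/
theorem stmt9 (n : ℕ) (A₁ B₁ C₁ D₁ A₂ B₂ C₂ D₂ θ : Matrix (Fin n) (Fin n) ℝ)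
    (hg1a : A₁ᵀ * C₁ + C₁ᵀ * A₁ = 0) (hg1b : B₁ᵀ * D₁ + D₁ᵀ * B₁ = 0)
    (hg1c : A₁ᵀ * D₁ + C₁ᵀ * B₁ = 1)
    (hg2a : A₂ᵀ * C₂ + C₂ᵀ * A₂ = 0) (hg2b : B₂ᵀ * D₂ + D₂ᵀ * B₂ = 0)
    (hg2c : A₂ᵀ * D₂ + C₂ᵀ * B₂ = 1)
    (hθ : θᵀ = -θ)
    (h2 : IsUnit (C₂ * θ + D₂))
    (h1 : IsUnit (C₁ * ((A₂ * θ + B₂) * (C₂ * θ + D₂)⁻¹) + D₁)) :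
    IsUnit ((C₁ * A₂ + D₁ * C₂) * θ + (C₁ * B₂ + D₁ * D₂)) ∧
    ((A₁ * A₂ + B₁ * C₂) * θ + (A₁ * B₂ + B₁ * D₂)) *
        ((C₁ * A₂ + D₁ * C₂) * θ + (C₁ * B₂ + D₁ * D₂))⁻¹ =
      (A₁ * ((A₂ * θ + B₂) * (C₂ * θ + D₂)⁻¹) + B₁) *
        (C₁ * ((A₂ * θ + B₂) * (C₂ * θ + D₂)⁻¹) + D₁)⁻¹ :=
  stmt9_general n A₁ B₁ C₁ D₁ A₂ B₂ C₂ D₂ θ h2 h1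
end

section
/- Let θ be an antisymmetric n×n real matrix written in block form θ = [[θ₁₁,θ₁₂],[θ₂₁,θ₂₂]] where θ₁₁ is the top-left 2p×2p block, and suppose θ₁₁ is invertible. Let σ_{2p} ∈ O(n,n|ℤ) be the transformation swapping aⁱ↔bᵢ for 1 ≤ i ≤ 2p. Then σ_{2p}·θ (the fractional-linear action) is defined and equals [[θ₁₁⁻¹, -θ₁₁⁻¹θ₁₂],[θ₂₁θ₁₁⁻¹, θ₂₂ - θ₂₁θ₁₁⁻¹θ₁₂]]. -/
/-!
For `σ_{2p}` the denominator `Cθ + D` is the block upper triangular matrix `[[θ₁₁, θ₁₂], [0, 1]]`,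
invertible exactly when `θ₁₁` is, with inverse `[[θ₁₁⁻¹, -θ₁₁⁻¹θ₁₂], [0, 1]]`; the numerator
`Aθ + B` is `[[1, 0], [θ₂₁, θ₂₂]]`, and multiplying the two gives the principal pivot transform
of `θ` at its top-left block.
-/

open Matrix

namespace Matrix

variable {R m n : Type*} [Fintype m] [Fintype n]

section Semiring

variable [Semiring R] [DecidableEq m] [DecidableEq n]

theorem fromBlocks_one_zero_mul_add_fromBlocks_zero_one (A : Matrix m m R) (B : Matrix m n R)
    (C : Matrix n m R) (D : Matrix n n R) :
    fromBlocks (1 : Matrix m m R) 0 0 0 * fromBlocks A B C D + fromBlocks 0 0 0 (1 : Matrix n n R) =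
      fromBlocks A B 0 1 := by
  simp [fromBlocks_multiply, fromBlocks_add]

theorem fromBlocks_zero_one_mul_add_fromBlocks_one_zero (A : Matrix m m R) (B : Matrix m n R)
    (C : Matrix n m R) (D : Matrix n n R) :
    fromBlocks 0 0 0 (1 : Matrix n n R) * fromBlocks A B C D + fromBlocks (1 : Matrix m m R) 0 0 0 =
      fromBlocks 1 0 C D := by
  simp [fromBlocks_multiply, fromBlocks_add]

end Semiring

theorem fromBlocks_one_zero_mul_fromBlocks_neg_zero_one [Ring R] [DecidableEq m] [DecidableEq n]
    (A' : Matrix m m R) (B : Matrix m n R) (C : Matrix n m R) (D : Matrix n n R) :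
    fromBlocks 1 0 C D * fromBlocks A' (-(A' * B)) 0 1 =
      fromBlocks A' (-(A' * B)) (C * A') (D - C * A' * B) := by
  rw [fromBlocks_multiply]
  congr 1 <;> simp [← Matrix.mul_assoc, sub_eq_neg_add]

theorem inv_fromBlocks_zero₂₁_one [CommRing R] [DecidableEq m] [DecidableEq n]
    {A : Matrix m m R} (B : Matrix m n R) (hA : IsUnit A) :
    (fromBlocks A B 0 (1 : Matrix n n R))⁻¹ = fromBlocks A⁻¹ (-(A⁻¹ * B)) 0 1 := by
  simpa using inv_fromBlocks_zero₂₁_of_isUnit_iff A B 1 (iff_of_true hA isUnit_one)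

end Matrix

theorem stmt11_general (p q : ℕ)
    (θ11 : Matrix (Fin (2 * p)) (Fin (2 * p)) ℝ) (θ12 : Matrix (Fin (2 * p)) (Fin q) ℝ)
    (θ21 : Matrix (Fin q) (Fin (2 * p)) ℝ) (θ22 : Matrix (Fin q) (Fin q) ℝ)
    (h11 : IsUnit θ11.det) :
    IsUnit (Matrix.fromBlocks (1 : Matrix (Fin (2 * p)) (Fin (2 * p)) ℝ) 0 0 0 *
        Matrix.fromBlocks θ11 θ12 θ21 θ22 +
        Matrix.fromBlocks 0 0 0 (1 : Matrix (Fin q) (Fin q) ℝ)) ∧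
    (Matrix.fromBlocks 0 0 0 (1 : Matrix (Fin q) (Fin q) ℝ) *
        Matrix.fromBlocks θ11 θ12 θ21 θ22 +
        Matrix.fromBlocks (1 : Matrix (Fin (2 * p)) (Fin (2 * p)) ℝ) 0 0 0) *
      (Matrix.fromBlocks (1 : Matrix (Fin (2 * p)) (Fin (2 * p)) ℝ) 0 0 0 *
        Matrix.fromBlocks θ11 θ12 θ21 θ22 +
        Matrix.fromBlocks 0 0 0 (1 : Matrix (Fin q) (Fin q) ℝ))⁻¹ =
      Matrix.fromBlocks θ11⁻¹ (-(θ11⁻¹ * θ12)) (θ21 * θ11⁻¹) (θ22 - θ21 * θ11⁻¹ * θ12) := by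
  have hθ11 : IsUnit θ11 := (isUnit_iff_isUnit_det θ11).mpr h11
  rw [fromBlocks_one_zero_mul_add_fromBlocks_zero_one,
    fromBlocks_zero_one_mul_add_fromBlocks_one_zero]
  exact ⟨isUnit_fromBlocks_zero₂₁.mpr ⟨hθ11, isUnit_one⟩, by
    rw [inv_fromBlocks_zero₂₁_one θ12 hθ11, fromBlocks_one_zero_mul_fromBlocks_neg_zero_one]⟩

/-- Let `θ = [[θ₁₁,θ₁₂],[θ₂₁,θ₂₂]]` be antisymmetric with top-left `2p × 2p` block `θ₁₁`
invertible. Then the fractional-linear action of `σ_{2p}` (with blocks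
`A = D = diag(0,…,0,1,…,1)`, `B = C = diag(1,…,1,0,…,0)`) is defined at `θ` and equals
`[[θ₁₁⁻¹, -θ₁₁⁻¹θ₁₂],[θ₂₁θ₁₁⁻¹, θ₂₂ - θ₂₁θ₁₁⁻¹θ₁₂]]`. -/
theorem stmt11 (p q : ℕ)
    (θ11 : Matrix (Fin (2 * p)) (Fin (2 * p)) ℝ) (θ12 : Matrix (Fin (2 * p)) (Fin q) ℝ)
    (θ21 : Matrix (Fin q) (Fin (2 * p)) ℝ) (θ22 : Matrix (Fin q) (Fin q) ℝ)
    (hθ : (Matrix.fromBlocks θ11 θ12 θ21 θ22)ᵀ = -(Matrix.fromBlocks θ11 θ12 θ21 θ22))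
    (h11 : IsUnit θ11.det) :
    IsUnit (Matrix.fromBlocks (1 : Matrix (Fin (2 * p)) (Fin (2 * p)) ℝ) 0 0 0 *
        Matrix.fromBlocks θ11 θ12 θ21 θ22 +
        Matrix.fromBlocks 0 0 0 (1 : Matrix (Fin q) (Fin q) ℝ)) ∧
    (Matrix.fromBlocks 0 0 0 (1 : Matrix (Fin q) (Fin q) ℝ) *
        Matrix.fromBlocks θ11 θ12 θ21 θ22 +
        Matrix.fromBlocks (1 : Matrix (Fin (2 * p)) (Fin (2 * p)) ℝ) 0 0 0) *
      (Matrix.fromBlocks (1 : Matrix (Fin (2 * p)) (Fin (2 * p)) ℝ) 0 0 0 *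
        Matrix.fromBlocks θ11 θ12 θ21 θ22 +
        Matrix.fromBlocks 0 0 0 (1 : Matrix (Fin q) (Fin q) ℝ))⁻¹ =
      Matrix.fromBlocks θ11⁻¹ (-(θ11⁻¹ * θ12)) (θ21 * θ11⁻¹) (θ22 - θ21 * θ11⁻¹ * θ12) :=
  stmt11_general p q θ11 θ12 θ21 θ22 h11
end

section
/- Let θ be an antisymmetric n×n real matrix in block form [[θ₁₁,θ₁₂],[θ₂₁,θ₂₂]] with θ₁₁ a 2p×2p invertible block, q = n - 2p. Let T₁₁ be invertible with T₁₁ᵗJ₀T₁₁ = -θ₁₁ where J₀ = [[0,I_p],[-I_p,0]], let T₃₁ = θ₁₂ᵗ, and let T₃₂ be any q×q matrix with θ₂₂ = T₃₂ᵗ - T₃₂. Set T = [[T₁₁,0],[0,I_q],[T₃₁,T₃₂]] (an (n+q)×n matrix) and J = [[J₀,0,0],[0,0,I_q],[0,-I_q,0]] (an (n+q)×(n+q) matrix). Then TᵗJT = -θ. -/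
open Matrix


lemma fromRows_zero_left {m₁ m₂ n₁ n₂ : Type*} (A : Matrix m₂ n₁ ℝ) (B : Matrix m₂ n₂ ℝ) :
    Matrix.fromRows (0 : Matrix m₁ (n₁ ⊕ n₂) ℝ) (Matrix.fromCols A B) =
      Matrix.fromBlocks 0 0 A B := by
  rw [← Matrix.fromCols_zero, Matrix.fromRows_fromCols_eq_fromBlocks]

lemma fromColumns_zero_left {m₁ m₂ n₁ n₂ : Type*} (A : Matrix m₁ n₂ ℝ) (B : Matrix m₂ n₂ ℝ) :
    Matrix.fromCols (0 : Matrix (m₁ ⊕ m₂) n₁ ℝ) (Matrix.fromRows A B) =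
      Matrix.fromBlocks 0 A 0 B := by
  rw [← Matrix.fromRows_zero, Matrix.fromCols_fromRows_eq_fromBlocks]

/-- With `θ = [[θ₁₁,θ₁₂],[θ₂₁,θ₂₂]]` antisymmetric (`θ₁₁` of size `2p`, `θ₂₂` of size
`q`), `T₁₁` satisfying `T₁₁ᵗJ₀T₁₁ = -θ₁₁`, `T₃₁ = θ₁₂ᵗ`, and `T₃₂` with
`θ₂₂ = T₃₂ᵗ - T₃₂`, the `(n+q) × n` matrix `T = [[T₁₁,0],[0,I],[T₃₁,T₃₂]]` and the
`(n+q) × (n+q)` matrix `J = [[J₀,0,0],[0,0,I],[0,-I,0]]` satisfy `TᵗJT = -θ`. -/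
theorem stmt13 (p q : ℕ)
    (θ11 : Matrix (Fin p ⊕ Fin p) (Fin p ⊕ Fin p) ℝ)
    (θ12 : Matrix (Fin p ⊕ Fin p) (Fin q) ℝ)
    (θ21 : Matrix (Fin q) (Fin p ⊕ Fin p) ℝ) (θ22 : Matrix (Fin q) (Fin q) ℝ)
    (hθ : (Matrix.fromBlocks θ11 θ12 θ21 θ22)ᵀ = -(Matrix.fromBlocks θ11 θ12 θ21 θ22))
    (T11 : Matrix (Fin p ⊕ Fin p) (Fin p ⊕ Fin p) ℝ) (hT11inv : IsUnit T11.det)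
    (hT11 : T11ᵀ * Matrix.fromBlocks 0 (1 : Matrix (Fin p) (Fin p) ℝ) (-1) 0 * T11 = -θ11)
    (T31 : Matrix (Fin q) (Fin p ⊕ Fin p) ℝ) (hT31 : T31 = θ12ᵀ)
    (T32 : Matrix (Fin q) (Fin q) ℝ) (hT32 : θ22 = T32ᵀ - T32) :
    (Matrix.fromRows (Matrix.fromBlocks T11 0 0 (1 : Matrix (Fin q) (Fin q) ℝ))
          (Matrix.fromCols T31 T32))ᵀ *
        Matrix.fromBlocks
          (Matrix.fromBlocks (Matrix.fromBlocks 0 (1 : Matrix (Fin p) (Fin p) ℝ) (-1 : Matrix (Fin p) (Fin p) ℝ) 0) 0 0 0)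
          (Matrix.fromRows 0 (1 : Matrix (Fin q) (Fin q) ℝ))
          (Matrix.fromCols 0 (-1 : Matrix (Fin q) (Fin q) ℝ)) 0 *
        Matrix.fromRows (Matrix.fromBlocks T11 0 0 (1 : Matrix (Fin q) (Fin q) ℝ))
          (Matrix.fromCols T31 T32)
      = -(Matrix.fromBlocks θ11 θ12 θ21 θ22) := by
  subst hT31
  rw [Matrix.mul_assoc]
  simp only [transpose_fromRows, fromBlocks_mul_fromRows, fromCols_mul_fromRows,
    fromRows_mul, mul_fromCols, fromBlocks_transpose, transpose_fromCols,
    fromCols_mul_fromBlocks, fromBlocks_multiply, Matrix.mul_add, Matrix.add_mul,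
    Matrix.zero_mul, Matrix.mul_zero, Matrix.one_mul, Matrix.mul_one, add_zero, zero_add,
    Matrix.mul_neg, Matrix.neg_mul, fromRows_zero_left, Matrix.transpose_zero,
    Matrix.transpose_one, Matrix.transpose_transpose, Matrix.fromCols_fromRows_eq_fromBlocks,
    Matrix.fromRows_fromCols_eq_fromBlocks]
  rw [fromRows_neg, fromColumns_zero_left, ← Matrix.mul_assoc, hT11]
  rw [fromBlocks_transpose] at hθ
  have h21 : θ21ᵀ = -θ12 := by
    have := (fromBlocks_inj.mp (hθ.trans (fromBlocks_neg _ _ _ _))).2.1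
    exact this
  have h12 : θ12ᵀ = -θ21 := by
    have h := congrArg Matrix.transpose h21
    rw [transpose_transpose, Matrix.transpose_neg] at h
    rw [h, neg_neg]
  rw [h12, hT32]
  rw [fromBlocks_neg, fromBlocks_add, fromBlocks_add]
  refine fromBlocks_inj.mpr ⟨by abel, by abel, by abel, by abel⟩
end

section
/- Let θ be a real antisymmetric 3×3 matrix such that the seven real numbers 1, θ₁₂, θ₁₃, θ₂₃, θ₁₂θ₁₃, θ₁₂θ₂₃, θ₁₃θ₂₃ are linearly independent over ℚ. Let φ be the antisymmetric matrix obtained from θ by replacing θ₁₂ with -θ₁₂. Then there is no A ∈ GL(3,ℤ) with AθAᵗ = φ. -/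
open Matrix

private lemma coeffs15 (x y z : ℝ)
    (hind : LinearIndependent ℚ ![(1:ℝ), x, y, z, x*y, x*z, y*z])
    (c1 c2 c3 : ℤ) (h : (c1:ℝ)*x + c2*y + c3*z = 0) :
    c1 = 0 ∧ c2 = 0 ∧ c3 = 0 := by
  have h7 := Fintype.linearIndependent_iff.mp hind ![0, (c1:ℚ), c2, c3, 0,0,0] ?_
  · refine ⟨?_, ?_, ?_⟩
    · have := h7 1; simpa using this
    · have := h7 2; simpa using this
    · have := h7 3; simpa using this
  · simp [Fin.sum_univ_succ, Rat.smul_def]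
    linear_combination h

/-- Let `θ` be a real antisymmetric `3 × 3` matrix such that `1, θ₁₂, θ₁₃, θ₂₃` together
with the pairwise products `θ₁₂θ₁₃, θ₁₂θ₂₃, θ₁₃θ₂₃` are linearly independent over `ℚ`,
and let `φ` be `θ` with `θ₁₂` replaced by `-θ₁₂`. Then no `A ∈ GL(3,ℤ)` satisfies
`A θ Aᵗ = φ`. -/
theorem stmt15 (θ φ : Matrix (Fin 3) (Fin 3) ℝ)
    (hθ : θᵀ = -θ) (hφ : φᵀ = -φ)
    (hind : LinearIndependent ℚ
      ![(1 : ℝ), θ 0 1, θ 0 2, θ 1 2, θ 0 1 * θ 0 2, θ 0 1 * θ 1 2, θ 0 2 * θ 1 2])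
    (hφ12 : φ 0 1 = -θ 0 1) (hφ13 : φ 0 2 = θ 0 2) (hφ23 : φ 1 2 = θ 1 2) :
    ∀ A : Matrix (Fin 3) (Fin 3) ℤ, IsUnit A.det →
      ¬ (A.map (Int.cast : ℤ → ℝ) * θ * (A.map (Int.cast : ℤ → ℝ))ᵀ = φ) := by
  intro A hA hAθ
  have e00 : θ 0 0 = 0 := by have := congrFun (congrFun hθ 0) 0; simp at this; linarith
  have e11 : θ 1 1 = 0 := by have := congrFun (congrFun hθ 1) 1; simp at this; linarith
  have e22 : θ 2 2 = 0 := by have := congrFun (congrFun hθ 2) 2; simp at this; linarith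
  have e10 : θ 1 0 = -θ 0 1 := by have := congrFun (congrFun hθ 0) 1; simpa using this
  have e20 : θ 2 0 = -θ 0 2 := by have := congrFun (congrFun hθ 0) 2; simpa using this
  have e21 : θ 2 1 = -θ 1 2 := by have := congrFun (congrFun hθ 1) 2; simpa using this
  set a := A 0 0 with ha
  set b := A 0 1 with hb
  set c := A 0 2 with hc
  set d := A 1 0 with hd
  set e := A 1 1 with he
  set f := A 1 2 with hf
  set g := A 2 0 with hg
  set h := A 2 1 with hh
  set i := A 2 2 with hi
  have h01 := congrFun (congrFun hAθ 0) 1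
  have h02 := congrFun (congrFun hAθ 0) 2
  have h12 := congrFun (congrFun hAθ 1) 2
  simp only [mul_apply, Fin.sum_univ_three, transpose_apply, map_apply,
    e00, e11, e22, e10, e20, e21, hφ12, hφ13, hφ23, ← ha, ← hb, ← hc, ← hd, ← he,
    ← hf, ← hg, ← hh, ← hi] at h01 h02 h12
  obtain ⟨k1, k2, k3⟩ := coeffs15 _ _ _ hind (a*e - b*d + 1) (a*f - c*d) (b*f - c*e)
    (by push_cast; linear_combination h01)
  obtain ⟨k4, k5, k6⟩ := coeffs15 _ _ _ hind (a*h - b*g) (a*i - c*g - 1) (b*i - c*h)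
    (by push_cast; linear_combination h02)
  obtain ⟨k7, k8, k9⟩ := coeffs15 _ _ _ hind (d*h - e*g) (d*i - f*g) (e*i - f*h - 1)
    (by push_cast; linear_combination h12)
  have hdet : A.det = a*e*i - a*f*h - b*d*i + b*f*g + c*d*h - c*e*g := by
    rw [Matrix.det_fin_three]
  have key : A.det ^ 2 = -1 := by
    rw [hdet]
    have hid : (a*e*i - a*f*h - b*d*i + b*f*g + c*d*h - c*e*g)^2 =
        (a*e - b*d)*((a*i - c*g)*(e*i - f*h) - (b*i - c*h)*(d*i - f*g))
        - (a*f - c*d)*((a*h - b*g)*(e*i - f*h) - (b*i - c*h)*(d*h - e*g))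
        + (b*f - c*e)*((a*h - b*g)*(d*i - f*g) - (a*i - c*g)*(d*h - e*g)) := by ring
    rw [hid]
    linear_combination ((a*i - c*g)*(e*i - f*h) - (b*i - c*h)*(d*i - f*g)) * k1
      - ((a*h - b*g)*(e*i - f*h) - (b*i - c*h)*(d*h - e*g)) * k2
      + ((a*h - b*g)*(d*i - f*g) - (a*i - c*g)*(d*h - e*g)) * k3
      + (-1 : ℤ) * ((e*i - f*h) * k5 - (d*i - f*g) * k6)
      + (-1 : ℤ) * ((1:ℤ) * k9)
  have := sq_nonneg A.det
  omega
end
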